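/- arXiv:2410.09888 — 2 statements merged into one kernel-verified Lean document; each statement's English description precedes it below -/
import Mathlib

section
/- If g ≥ 3, then there are no integers u ≥ 0, s ≥ 0 with u + s ≥ 1 and d_1, ..., d_s ∈ {2,3,4,6} such that 12(g-1) · (u + Σ_{j=1}^{s} 1/d_j) = g. -/
theorem stmt_6 (g u s : ℕ) (hg : 3 ≤ g) (d : Fin s → ℕ)
    (hd : ∀ j, d j ∈ ({2, 3, 4, 6} : Set ℕ)) (hus : 1 ≤ u + s)
    (heq : (12 * ((g : ℚ) - 1)) * ((u : ℚ) + ∑ j, (1 : ℚ) / (d j)) = (g : ℚ)) :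
    False := by
  have hsum : (s : ℚ) * (1/6) ≤ ∑ j, (1 : ℚ) / (d j) := by
    calc (s : ℚ) * (1/6) = ∑ _j : Fin s, (1/6 : ℚ) := by
          simp [Finset.sum_const, mul_comm]
      _ ≤ ∑ j, (1 : ℚ) / (d j) := by
          apply Finset.sum_le_sum
          intro j _
          have h := hd j
          simp only [Set.mem_insert_iff, Set.mem_singleton_iff] at h
          rcases h with h | h | h | h <;> rw [h] <;> norm_num
  have hg' : (3:ℚ) ≤ (g:ℚ) := by exact_mod_cast hg
  have hus' : (1:ℚ) ≤ (u:ℚ) + (s:ℚ) := by exact_mod_cast hus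
  have hu0 : (0:ℚ) ≤ (u:ℚ) := by positivity
  nlinarith [hsum, hg', hus', hu0, mul_nonneg (sub_nonneg.2 hg') hu0,
    mul_le_mul_of_nonneg_left hsum (by linarith : (0:ℚ) ≤ 12 * ((g:ℚ) - 1))]
end

section
/- Let K = ⟨A, B⟩ where A(z) = iz and B(z) = -z + 1, acting on ℂ. Then the subgroup of translations in K is the lattice ℤ + ℤi, it is normal in K, and the quotient is cyclic of order 4. -/
/-!
Every element of `K` has the form `z ↦ I ^ k * z + b` with `b ∈ ℤ[i]`: such maps form a group
containing both generators. The exponent `k` modulo 4 is then a homomorphism onto `ℤ/4`, sending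
`A` to the generator, whose kernel consists exactly of the translations. Conversely `B * A * A` is
translation by `1`, and conjugating it by `A` gives translation by `I`, so every translation by an
element of `ℤ[i]` lies in `K`.
-/

open Complex Equiv

/-- The subgroup of translations inside the group of bijections of `ℂ`. -/
def translations : Subgroup (Equiv.Perm ℂ) where
  carrier := {σ | ∃ t : ℂ, σ = Equiv.addRight t}
  one_mem' := ⟨0, by ext x; simp⟩
  mul_mem' := by
    rintro σ τ ⟨t, rfl⟩ ⟨s, rfl⟩
    exact ⟨s + t, by ext x; simp [Equiv.Perm.mul_apply, add_assoc]⟩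
  inv_mem' := by
    rintro σ ⟨t, rfl⟩
    exact ⟨-t, by ext x; simp [Equiv.Perm.inv_def]⟩

def gaussianLattice : AddSubgroup ℂ := AddSubgroup.closure {1, I}

lemma I_mul_mem_gaussianLattice {b : ℂ} (hb : b ∈ gaussianLattice) :
    I * b ∈ gaussianLattice := by
  obtain ⟨m, n, rfl⟩ := AddSubgroup.mem_closure_pair.mp hb
  refine AddSubgroup.mem_closure_pair.mpr ⟨-n, m, ?_⟩
  simp only [zsmul_eq_mul, Int.cast_neg]
  linear_combination (-n : ℂ) * I_sq

lemma I_pow_mul_mem_gaussianLattice (k : ℕ) {b : ℂ} (hb : b ∈ gaussianLattice) :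
    I ^ k * b ∈ gaussianLattice := by
  induction k with
  | zero => simpa using hb
  | succ k ih => simpa only [pow_succ', mul_assoc] using I_mul_mem_gaussianLattice ih

lemma addRight_mem_closure_of_mem_gaussianLattice {b : ℂ} (hb : b ∈ gaussianLattice) :
    Equiv.addRight b ∈ Subgroup.closure {Equiv.addRight 1, Equiv.addRight I} := by
  obtain ⟨m, n, rfl⟩ := AddSubgroup.mem_closure_pair.mp hb
  rw [addRight_add, ← zsmul_addRight, ← zsmul_addRight]
  exact mul_mem (zpow_mem (Subgroup.subset_closure (by simp)) n)
    (zpow_mem (Subgroup.subset_closure (by simp)) m)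

lemma I_pow_eq_I_pow_val (n : ℕ) : I ^ n = I ^ (n : ZMod 4).val := by
  rw [ZMod.val_natCast, ← pow_eq_pow_mod n I_pow_four]

/-- Reads off `k mod 4` from `I ^ k`; its value elsewhere is irrelevant. -/
noncomputable def quarterTurns : ℂ → ZMod 4 := Function.invFun fun k : ZMod 4 => I ^ k.val

lemma quarterTurns_I_pow (n : ℕ) : quarterTurns (I ^ n) = n := by
  rw [I_pow_eq_I_pow_val]
  refine Function.leftInverse_invFun (fun j k h => ?_) _
  exact ZMod.val_injective 4 (isPrimitiveRoot_I.pow_inj (ZMod.val_lt j) (ZMod.val_lt k) h)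

lemma quarterTurns_apply_one_sub_apply_zero {σ : ℂ → ℂ} {k : ℕ} {b : ℂ}
    (hσ : ∀ z, σ z = I ^ k * z + b) : quarterTurns (σ 1 - σ 0) = k := by
  rw [hσ, hσ, mul_one, mul_zero, zero_add, add_sub_cancel_right, quarterTurns_I_pow]

def gaussianAffine : Subgroup (Perm ℂ) where
  carrier := {σ | ∃ k : ℕ, ∃ b ∈ gaussianLattice, ∀ z, σ z = I ^ k * z + b}
  one_mem' := ⟨0, 0, zero_mem _, by simp⟩
  mul_mem' := by
    rintro σ τ ⟨k, b, hb, hσ⟩ ⟨j, c, hc, hτ⟩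
    refine ⟨k + j, I ^ k * c + b, add_mem (I_pow_mul_mem_gaussianLattice k hc) hb, fun z => ?_⟩
    rw [Perm.mul_apply, hτ, hσ]
    ring
  inv_mem' := by
    rintro σ ⟨k, b, hb, hσ⟩
    refine ⟨3 * k, -(I ^ (3 * k) * b), neg_mem (I_pow_mul_mem_gaussianLattice _ hb), fun z => ?_⟩
    have hI : I ^ k * I ^ (3 * k) = 1 := by
      rw [← pow_add, show k + 3 * k = 4 * k by ring, pow_mul, I_pow_four, one_pow]
    rw [Perm.inv_eq_iff_eq, hσ]
    linear_combination (b - z) * hI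

namespace gaussianAffine

noncomputable def rotation : gaussianAffine →* Multiplicative (ZMod 4) where
  toFun σ := .ofAdd (quarterTurns ((σ : Perm ℂ) 1 - (σ : Perm ℂ) 0))
  map_one' := by simpa using congrArg Multiplicative.ofAdd (quarterTurns_I_pow 0)
  map_mul' σ τ := by
    obtain ⟨k, b, -, hσ⟩ := σ.2
    obtain ⟨j, c, -, hτ⟩ := τ.2
    have hστ : ∀ z, (σ * τ : gaussianAffine).1 z = I ^ (k + j) * z + (I ^ k * c + b) := by
      intro z
      rw [Subgroup.coe_mul, Perm.mul_apply, hτ, hσ]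
      ring
    simp only [quarterTurns_apply_one_sub_apply_zero hσ, quarterTurns_apply_one_sub_apply_zero hτ,
      quarterTurns_apply_one_sub_apply_zero hστ, Nat.cast_add, ofAdd_add]

lemma mem_translations_iff_rotation_eq_one (σ : gaussianAffine) :
    (σ : Perm ℂ) ∈ translations ↔ rotation σ = 1 := by
  obtain ⟨k, b, -, hσ⟩ := σ.2
  change _ ↔ Multiplicative.ofAdd (quarterTurns _) = Multiplicative.ofAdd 0
  rw [quarterTurns_apply_one_sub_apply_zero hσ, Multiplicative.ofAdd.injective.eq_iff]
  constructor
  · rintro ⟨t, ht⟩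
    have hk : I ^ k = 1 := by
      have h0 := hσ 0
      have h1 := hσ 1
      simp only [ht, coe_addRight, mul_zero, mul_one, zero_add] at h0 h1
      linear_combination h0 - h1
    rw [← quarterTurns_I_pow k, hk, ← pow_zero I, quarterTurns_I_pow, Nat.cast_zero]
  · intro hk
    refine ⟨b, Perm.ext fun z => ?_⟩
    rw [hσ, I_pow_eq_I_pow_val, hk, ZMod.val_zero, pow_zero, one_mul, coe_addRight]

end gaussianAffine

lemma translations_inf_gaussianAffine_le :
    translations ⊓ gaussianAffine ≤ Subgroup.closure {Equiv.addRight 1, Equiv.addRight I} := by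
  rintro σ ⟨⟨t, rfl⟩, k, b, hb, hσ⟩
  have htb : t = b := by simpa using hσ 0
  exact htb ▸ addRight_mem_closure_of_mem_gaussianLattice hb

lemma MonoidHom.surjective_of_apply_eq_ofAdd_one {G : Type*} [Group G] {n : ℕ}
    (f : G →* Multiplicative (ZMod n)) {g : G} (hg : f g = .ofAdd 1) : Function.Surjective f := by
  intro x
  refine ⟨g ^ (x.toAdd.cast : ℤ), ?_⟩
  rw [map_zpow, hg, ← ofAdd_zsmul, zsmul_one, ZMod.intCast_zmod_cast, ofAdd_toAdd]

/-- In the wallpaper group `K₄ = ⟨z ↦ iz, z ↦ -z+1⟩`, the translation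
subgroup is the lattice `ℤ + ℤi`, it is normal, and the quotient is cyclic of
order 4 (i.e. there is a surjection onto `ℤ/4` with the translations as
kernel). -/
theorem stmt_13 (A B : Equiv.Perm ℂ)
    (hA : A = Equiv.mulLeft₀ (I : ℂ) I_ne_zero)
    (hB : B = (Equiv.neg ℂ).trans (Equiv.addRight (1 : ℂ)))
    (K : Subgroup (Equiv.Perm ℂ)) (hK : K = Subgroup.closure {A, B})
    (T : Subgroup (Equiv.Perm ℂ)) (hT : T = translations ⊓ K) :
    T = Subgroup.closure {Equiv.addRight (1 : ℂ), Equiv.addRight (I : ℂ)} ∧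
      (T.subgroupOf K).Normal ∧
      ∃ f : K →* Multiplicative (ZMod 4),
        Function.Surjective f ∧ f.ker = T.subgroupOf K := by
  have hA_apply (z : ℂ) : A z = I ^ 1 * z + 0 := by simp [hA]
  have hB_apply (z : ℂ) : B z = I ^ 2 * z + 1 := by simp [hB, I_sq]
  have hAK : A ∈ K := hK ▸ Subgroup.subset_closure (Set.mem_insert _ _)
  have hBK : B ∈ K := hK ▸ Subgroup.subset_closure (Set.mem_insert_of_mem _ rfl)
  have hKG : K ≤ gaussianAffine := hK ▸ (Subgroup.closure_le _).mpr
    (Set.pair_subset ⟨1, 0, zero_mem _, hA_apply⟩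
      ⟨2, 1, AddSubgroup.subset_closure (Set.mem_insert _ _), hB_apply⟩)
  have h1K : Equiv.addRight 1 ∈ K := by
    have h1_eq : Equiv.addRight 1 = B * A * A := Perm.ext fun z => by
      simp only [Perm.mul_apply, hA_apply, hB_apply, coe_addRight]
      linear_combination (-z) * I_pow_four
    exact h1_eq ▸ mul_mem (mul_mem hBK hAK) hAK
  have hIK : Equiv.addRight I ∈ K := by
    have hI_eq : Equiv.addRight I = A * Equiv.addRight 1 * A⁻¹ := by
      rw [eq_mul_inv_iff_mul_eq]
      exact Perm.ext fun z => by simp only [Perm.mul_apply, hA_apply, coe_addRight]; ring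
    exact hI_eq ▸ mul_mem (mul_mem hAK h1K) (inv_mem hAK)
  let f := gaussianAffine.rotation.comp (Subgroup.inclusion hKG)
  have hker : f.ker = T.subgroupOf K := by
    ext σ
    rw [MonoidHom.mem_ker, Subgroup.mem_subgroupOf, hT, Subgroup.mem_inf, and_iff_left σ.2]
    exact (gaussianAffine.mem_translations_iff_rotation_eq_one _).symm
  refine ⟨le_antisymm ?_ ?_, hker ▸ f.normal_ker, f, ?_, hker⟩
  · exact hT ▸ (inf_le_inf_left _ hKG).trans translations_inf_gaussianAffine_le
  · exact hT ▸ (Subgroup.closure_le _).mpr (Set.pair_subset ⟨⟨1, rfl⟩, h1K⟩ ⟨⟨I, rfl⟩, hIK⟩)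
  · refine MonoidHom.surjective_of_apply_eq_ofAdd_one f (g := ⟨A, hAK⟩) ?_
    exact congrArg Multiplicative.ofAdd (quarterTurns_apply_one_sub_apply_zero hA_apply)
end
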